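/- arXiv:2605.08745 — 6 statements merged into one kernel-verified Lean document; each statement's English description precedes it below -/
import Mathlib

section
/- For every integer n ≥ 2 and every prime m, every parity-oblivious classical strategy for the (n,m) parity-oblivious random exclusion code satisfies P_POREC ≤ 1 − (n−1)/(m·n). -/
open Finset

/-!
Fix a message `M` and let `q = p(M | ·)`. Summing, over all masks `r`, the weight of the parity
class of `r` that contains `x` counts every `x' ≠ x` exactly `m^(n-1)` times and `x` itself `m^n`
times. On the other hand, parity-obliviousness fixes that weight to `∑ q / m` for every mask with
two or more nonzero entries, and for the remaining masks `r = 0` and `r = a • e_y` the weight is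
either `∑ q` or a one-coordinate marginal `q_y(x_y)`. Comparing the two evaluations shows that `q`
is determined by its marginals:
  `m ∑_y q_y(x_y) = m^n q(x) + (n - 1) ∑ q`.
So `m ∑_y q_y(c_y) ≥ (n - 1) ∑ q` for every choice of values `c_y`. For each `M` and `y`, the
weight of the decoder's wrong answer `b = x_y` is a convex combination of the marginals `q_y(c)`,
hence at least their minimum, so the average error probability is at least `(n - 1) / (m n)`.
-/

theorem exists_le_sum_mul_of_sum_eq_one {α : Type*} [Fintype α] (g w : α → ℝ)
    (hw : ∀ c, 0 ≤ w c) (hw_sum : ∑ c, w c = 1) : ∃ c₀, g c₀ ≤ ∑ c, g c * w c := by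
  obtain ⟨c₀, -, hmin⟩ :=
    exists_min_image univ g (nonempty_of_sum_ne_zero (hw_sum ▸ one_ne_zero))
  refine ⟨c₀, ?_⟩
  calc g c₀ = ∑ c, g c₀ * w c := by rw [← mul_sum, hw_sum, mul_one]
    _ ≤ ∑ c, g c * w c := sum_le_sum fun c hc => mul_le_mul_of_nonneg_right (hmin c hc) (hw c)

theorem Fintype.sum_pi_eq_add_sum_single {ι M β : Type*} [Fintype ι] [DecidableEq ι]
    [Fintype M] [DecidableEq M] [Zero M] [AddCommMonoid β] (f : (ι → M) → β)
    (hf : ∀ r, 2 ≤ #{i | r i ≠ 0} → f r = 0) :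
    ∑ r, f r = f 0 + ∑ y, ∑ a ∈ univ.erase 0, f (Pi.single y a) := by
  set S := (univ ×ˢ univ.erase 0).image fun ya : ι × M => (Pi.single ya.1 ya.2 : ι → M)
  have hinj : Set.InjOn (fun ya : ι × M => (Pi.single ya.1 ya.2 : ι → M))
      (univ ×ˢ univ.erase 0 : Finset (ι × M)) := by
    rintro ⟨y, a⟩ hya ⟨y', a'⟩ - h
    have ha : a ≠ 0 := by simpa using hya
    obtain rfl : y = y' := by
      by_contra hne
      simpa [Pi.single_apply, Ne.symm hne, ha] using congrFun h y
    simpa using Pi.single_injective y h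
  have h0 : (0 : ι → M) ∉ S := by simp [S, Pi.single_eq_zero_iff]
  have hsmall : ∀ r ∉ insert 0 S, f r = 0 := by
    intro r hr
    refine hf r (not_lt.mp fun hlt => ?_)
    obtain ⟨y, hy⟩ := Function.ne_iff.mp fun h : r = 0 => hr (h ▸ mem_insert_self 0 S)
    have hr_single : Pi.single y (r y) = r := by
      funext i
      by_cases hi : i = y
      · subst hi; simp
      · rw [Pi.single_eq_of_ne hi]
        by_contra hri
        have : 1 < #{i | r i ≠ 0} :=
          Finset.one_lt_card_iff.mpr ⟨i, y, by simpa using Ne.symm hri, by simpa using hy, hi⟩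
        omega
    exact hr (mem_insert_of_mem (mem_image.mpr ⟨(y, r y), by simpa using hy, hr_single⟩))
  rw [← Finset.sum_subset (subset_univ _) fun r _ hr => hsmall r hr, sum_insert h0,
    sum_image hinj, sum_product]

section Marginal

variable {ι α : Type*} [Fintype ι] [DecidableEq ι] [Fintype α] [DecidableEq α]

def marginal (q : (ι → α) → ℝ) (y : ι) (c : α) : ℝ :=
  ∑ x with x y = c, q x

theorem sum_mul_apply_eq_sum_marginal_mul (q : (ι → α) → ℝ) (g : α → ℝ) (y : ι) :
    ∑ x, q x * g (x y) = ∑ c, marginal q y c * g c := by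
  rw [← sum_fiberwise univ (· y)]
  refine sum_congr rfl fun c _ => ?_
  rw [marginal, sum_mul]
  exact sum_congr rfl fun x hx => by rw [(mem_filter.mp hx).2]

theorem sum_mul_sum_filter_ne_eq {𝕄 : Type*} [Fintype 𝕄] (p : 𝕄 → (ι → α) → ℝ)
    (ξ : α → 𝕄 → ι → ℝ)
    (hp_sum : ∀ x, ∑ M, p M x = 1) (hξ_sum : ∀ M y, ∑ b, ξ b M y = 1) :
    ∑ x, ∑ y, ∑ M, p M x * ∑ b ∈ univ.filter (· ≠ x y), ξ b M y =
      Fintype.card ι * Fintype.card α ^ Fintype.card ι -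
        ∑ M, ∑ y, ∑ c, marginal (p M) y c * ξ c M y := by
  have hmiss : ∀ (x : ι → α) y M, ∑ b ∈ univ.filter (· ≠ x y), ξ b M y = 1 - ξ (x y) M y := by
    intro x y M
    rw [filter_ne', sum_erase_eq_sub (mem_univ _), hξ_sum]
  simp only [hmiss, mul_sub, mul_one, sum_sub_distrib, hp_sum]
  congr 1
  · simp [Fintype.card_pi, mul_comm]
  calc ∑ x : ι → α, ∑ y, ∑ M, p M x * ξ (x y) M y = ∑ y, ∑ M, ∑ x, p M x * ξ (x y) M y := by
        rw [sum_comm]; exact sum_congr rfl fun y _ => sum_comm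
    _ = ∑ M, ∑ y, ∑ x, p M x * ξ (x y) M y := sum_comm
    _ = ∑ M, ∑ y, ∑ c, marginal (p M) y c * ξ c M y :=
        sum_congr rfl fun M _ => sum_congr rfl fun y _ =>
          sum_mul_apply_eq_sum_marginal_mul (p M) (ξ · M y) y

end Marginal

section ParityClasses

variable {ι F : Type*} [Fintype ι] [DecidableEq ι] [Field F] [Fintype F] [DecidableEq F]

theorem card_mul_card_filter_dotProduct_eq_zero {z : ι → F} (hz : z ≠ 0) :
    Fintype.card F * #{r : ι → F | r ⬝ᵥ z = 0} = Fintype.card F ^ Fintype.card ι := by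
  obtain ⟨j, hj⟩ := Function.ne_iff.mp hz
  let f : (ι → F) →+ F := AddMonoidHom.mk' (· ⬝ᵥ z) fun a b => add_dotProduct a b z
  have hf : Function.Surjective f := fun k =>
    ⟨Pi.single j (k / z j), by simp [f, single_dotProduct, div_mul_cancel₀ _ hj]⟩
  have h := f.ker.card_mul_index
  rw [AddSubgroup.index_ker, AddMonoidHom.range_eq_top.mpr hf, AddSubgroup.card_top] at h
  simpa [mul_comm, Nat.card_eq_fintype_card, Fintype.card_subtype, f] using h

def parityClassWeight (q : (ι → F) → ℝ) (r : ι → F) (k : F) : ℝ :=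
  ∑ x with r ⬝ᵥ x = k, q x

def IsParityOblivious (q : (ι → F) → ℝ) : Prop :=
  ∀ r : ι → F, 2 ≤ #{i | r i ≠ 0} → ∀ k k', parityClassWeight q r k = parityClassWeight q r k'

theorem IsParityOblivious.card_mul_parityClassWeight {q : (ι → F) → ℝ}
    (hq : IsParityOblivious q) {r : ι → F} (hr : 2 ≤ #{i | r i ≠ 0}) (k : F) :
    Fintype.card F * parityClassWeight q r k = ∑ x, q x :=
  calc _ = ∑ k', parityClassWeight q r k' := by simp [hq r hr _ k]
    _ = ∑ x, q x := sum_fiberwise univ (r ⬝ᵥ ·) q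

theorem parityClassWeight_single_dotProduct (q : (ι → F) → ℝ) (x : ι → F) {y : ι} {a : F}
    (ha : a ≠ 0) :
    parityClassWeight q (Pi.single y a) (Pi.single y a ⬝ᵥ x) = marginal q y (x y) := by
  simp only [parityClassWeight, marginal, single_dotProduct, mul_right_inj' ha]

theorem card_mul_card_filter_dotProduct_eq (x' x : ι → F) :
    (Fintype.card F * #{r : ι → F | r ⬝ᵥ x' = r ⬝ᵥ x} : ℝ) =
      Fintype.card F ^ Fintype.card ι * (1 + if x' = x then (Fintype.card F - 1 : ℝ) else 0) := by
  split_ifs with h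
  · simp only [h, filter_true, card_univ, Fintype.card_pi, prod_const, Nat.cast_pow,
      add_sub_cancel]
    ring
  · have hcount := card_mul_card_filter_dotProduct_eq_zero (sub_ne_zero.mpr h)
    simp only [dotProduct_sub, sub_eq_zero] at hcount
    rw [add_zero, mul_one]
    exact_mod_cast hcount

theorem sum_card_mul_parityClassWeight_dotProduct (q : (ι → F) → ℝ) (x : ι → F) :
    ∑ r, Fintype.card F * parityClassWeight q r (r ⬝ᵥ x) =
      Fintype.card F ^ Fintype.card ι * (∑ x', q x' + (Fintype.card F - 1) * q x) := by
  calc ∑ r, Fintype.card F * parityClassWeight q r (r ⬝ᵥ x)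
      = ∑ x', Fintype.card F * #{r : ι → F | r ⬝ᵥ x' = r ⬝ᵥ x} * q x' := by
        simp only [parityClassWeight, mul_sum, sum_filter]
        rw [sum_comm]
        simp [← sum_filter, mul_left_comm, mul_assoc]
    _ = _ := by
        simp [card_mul_card_filter_dotProduct_eq, mul_assoc, ← mul_sum, add_mul, sum_add_distrib,
          ite_mul]

theorem IsParityOblivious.card_mul_sum_marginal {q : (ι → F) → ℝ} (hq : IsParityOblivious q)
    (x : ι → F) :
    Fintype.card F * ∑ y, marginal q y (x y) =
      Fintype.card F ^ Fintype.card ι * q x + (Fintype.card ι - 1) * ∑ x', q x' := by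
  have hsum := Fintype.sum_pi_eq_add_sum_single
    (fun r => Fintype.card F * parityClassWeight q r (r ⬝ᵥ x) - ∑ x', q x')
    fun r hr => sub_eq_zero.mpr (hq.card_mul_parityClassWeight hr _)
  have hsingle : ∀ y, ∑ a ∈ univ.erase 0,
      (Fintype.card F * parityClassWeight q (Pi.single y a) (Pi.single y a ⬝ᵥ x) - ∑ x', q x') =
        (Fintype.card F - 1) * (Fintype.card F * marginal q y (x y) - ∑ x', q x') := by
    intro y
    rw [sum_congr rfl fun a ha => by
        rw [parityClassWeight_single_dotProduct q x (ne_of_mem_erase ha)],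
      sum_const, card_erase_of_mem (mem_univ _), card_univ, nsmul_eq_mul,
      Nat.cast_pred Fintype.card_pos]
  rw [sum_sub_distrib, sum_card_mul_parityClassWeight_dotProduct,
    sum_congr rfl fun y _ => hsingle y, ← mul_sum, sum_sub_distrib, ← mul_sum] at hsum
  simp only [sum_const, card_univ, Fintype.card_pi, prod_const, nsmul_eq_mul, Nat.cast_pow,
    parityClassWeight, zero_dotProduct, filter_true] at hsum
  have hm : (Fintype.card F : ℝ) - 1 ≠ 0 :=
    sub_ne_zero.mpr (by exact_mod_cast (Fintype.one_lt_card (α := F)).ne')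
  exact mul_left_cancel₀ hm (by linear_combination -hsum)

theorem IsParityOblivious.sub_one_mul_sum_le {q : (ι → F) → ℝ} (hq : IsParityOblivious q)
    (hq_nonneg : ∀ x, 0 ≤ q x) (ξ : F → ι → ℝ) (hξ_nonneg : ∀ c y, 0 ≤ ξ c y)
    (hξ_sum : ∀ y, ∑ c, ξ c y = 1) :
    (Fintype.card ι - 1) * ∑ x, q x ≤ Fintype.card F * ∑ y, ∑ c, marginal q y c * ξ c y := by
  choose x hx using fun y =>
    exists_le_sum_mul_of_sum_eq_one (marginal q y) (ξ · y) (hξ_nonneg · y) (hξ_sum y)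
  calc (Fintype.card ι - 1) * ∑ x, q x
      ≤ Fintype.card F ^ Fintype.card ι * q x + (Fintype.card ι - 1) * ∑ x, q x :=
        le_add_of_nonneg_left (by positivity [hq_nonneg x])
    _ = Fintype.card F * ∑ y, marginal q y (x y) := (hq.card_mul_sum_marginal x).symm
    _ ≤ Fintype.card F * ∑ y, ∑ c, marginal q y c * ξ c y := by gcongr with y; exact hx y

end ParityClasses

/-- **Classical bound for the (n,m) POREC.** For every integer `n ≥ 2` and every prime `m`,
every parity-oblivious classical strategy (encoding `p`, decoding `ξ`) for the `(n,m)`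
parity-oblivious random exclusion code has success probability at most `1 - (n-1)/(m·n)`. -/
theorem porec_classical_bound
    (n : ℕ) (hn : 2 ≤ n) (m : ℕ) (hm : Nat.Prime m) [NeZero m]
    (𝕄 : Type) [Fintype 𝕄]
    (p : 𝕄 → (Fin n → ZMod m) → ℝ)
    (ξ : ZMod m → 𝕄 → Fin n → ℝ)
    (hp_nonneg : ∀ M x, 0 ≤ p M x)
    (hp_sum : ∀ x, ∑ M, p M x = 1)
    (hξ_nonneg : ∀ b M y, 0 ≤ ξ b M y)
    (hξ_sum : ∀ M y, ∑ b, ξ b M y = 1)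
    (hPO : ∀ r : Fin n → ZMod m,
      2 ≤ (Finset.univ.filter fun i => r i ≠ 0).card →
      ∀ M, ∀ k k' : ZMod m,
        ∑ x ∈ Finset.univ.filter (fun x : Fin n → ZMod m => ∑ i, r i * x i = k), p M x =
        ∑ x ∈ Finset.univ.filter (fun x : Fin n → ZMod m => ∑ i, r i * x i = k'), p M x) :
    (1 / (n * m ^ n) : ℝ) *
        ∑ x : Fin n → ZMod m, ∑ y : Fin n, ∑ M,
          p M x * ∑ b ∈ Finset.univ.filter (fun b => b ≠ x y), ξ b M y
      ≤ 1 - ((n : ℝ) - 1) / (m * n) := by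
  have : Fact m.Prime := ⟨hm⟩
  set G := ∑ M, ∑ y, ∑ c, marginal (p M) y c * ξ c M y
  have hG : ((n : ℝ) - 1) * m ^ n ≤ m * G := by
    have hmass : ∑ M, ∑ x, p M x = (m : ℝ) ^ n := by
      rw [sum_comm]; simp [hp_sum, Fintype.card_pi]
    calc ((n : ℝ) - 1) * m ^ n = ∑ M, ((n : ℝ) - 1) * ∑ x, p M x := by rw [← mul_sum, hmass]
      _ ≤ ∑ M, (m : ℝ) * ∑ y, ∑ c, marginal (p M) y c * ξ c M y := by
        refine sum_le_sum fun M _ => ?_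
        simpa using (show IsParityOblivious (p M) from fun r hr k k' => hPO r hr M k k')
          |>.sub_one_mul_sum_le (hp_nonneg M) (ξ · M) (hξ_nonneg · M) (hξ_sum M)
      _ = m * G := by rw [mul_sum]
  have hn0 : (0 : ℝ) < n := by exact_mod_cast (by omega : 0 < n)
  have hm0 : (0 : ℝ) < m := by exact_mod_cast hm.pos
  rw [sum_mul_sum_filter_ne_eq p ξ hp_sum hξ_sum, Fintype.card_fin, ZMod.card]
  calc 1 / (n * m ^ n) * (n * m ^ n - G) = 1 - m * G / (m * (n * m ^ n)) := by field_simp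
    _ ≤ 1 - (n - 1) * m ^ n / (m * (n * m ^ n)) := by gcongr
    _ = 1 - (n - 1) / (m * n) := by field_simp
end

section
/- For every integer n ≥ 2 and every prime m, there exists a parity-oblivious classical strategy for the (n,m) parity-oblivious random exclusion code achieving P_POREC = 1 − (n−1)/(m·n); explicitly, the strategy with message set 𝕄 = ZMod m that deterministically sends M = x_1, and decodes by outputting b = M + 1 when y = 1 and b = 0 when y ≠ 1, is parity-oblivious and attains this value. -/
/-!
Parity obliviousness: if `r j ≠ 0` for some `j ≠ 0`, translating `x` along the `j`-th axis moves
`r ⬝ᵥ x` through every value of `ZMod m` without changing the message `x 0`, so all parity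
classes carry the same message distribution.

Success: the decoder always succeeds at `y = 0` (it outputs `x 0 + 1 ≠ x 0`), and at `y ≠ 0` it
fails exactly when `x y = 0`, which happens for a fraction `1/m` of the inputs. Hence the failure
probability is `(n - 1)/(m n)`.
-/

open Finset

section ParityOblivious

variable {ι F : Type*} [Fintype ι] [DecidableEq ι] [Field F] [Fintype F] [DecidableEq F]

theorem sum_apply_filter_dotProduct_eq {β : Type*} [AddCommMonoid β] (r : ι → F) {i₀ j : ι}
    (hj : r j ≠ 0) (hji : j ≠ i₀) (g : F → β) (k k' : F) :
    ∑ x ∈ univ.filter (fun x : ι → F => r ⬝ᵥ x = k), g (x i₀) =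
      ∑ x ∈ univ.filter (fun x : ι → F => r ⬝ᵥ x = k'), g (x i₀) := by
  refine sum_equiv (Equiv.addRight (Pi.single j ((k' - k) / r j))) (fun x => ?_) (fun x _ => ?_)
  · simp only [mem_filter, mem_univ, true_and, Equiv.coe_addRight, dotProduct_add,
      dotProduct_single, mul_div_cancel₀ _ hj]
    rw [← eq_sub_iff_add_eq, sub_sub_cancel]
  · simp [hji.symm]

theorem sum_apply_filter_dotProduct_eq_of_two_le_card {β : Type*} [AddCommMonoid β]
    (r : ι → F) (hr : 2 ≤ #{i | r i ≠ 0}) (i₀ : ι) (g : F → β) (k k' : F) :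
    ∑ x ∈ univ.filter (fun x : ι → F => r ⬝ᵥ x = k), g (x i₀) =
      ∑ x ∈ univ.filter (fun x : ι → F => r ⬝ᵥ x = k'), g (x i₀) := by
  obtain ⟨j, hj, hji⟩ := exists_mem_ne hr i₀
  exact sum_apply_filter_dotProduct_eq r (mem_filter.mp hj).2 hji g k k'

end ParityOblivious

section Success

variable {ι F : Type*} [DecidableEq ι] [DecidableEq F]

noncomputable def successProbability [Fintype ι] [Fintype F] {𝕄 : Type*} [Fintype 𝕄]
    (p : (ι → F) → 𝕄 → ℝ) (ξ : 𝕄 → ι → F → ℝ) : ℝ :=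
  1 / (Fintype.card ι * Fintype.card F ^ Fintype.card ι) *
    ∑ x, ∑ y, ∑ M, p x M * ∑ b ∈ univ.filter (fun b => b ≠ x y), ξ M y b

def digitEncoding (i₀ : ι) (x : ι → F) (M : F) : ℝ :=
  if M = x i₀ then 1 else 0

def shiftDecoding [Add F] [One F] [Zero F] (i₀ : ι) (M : F) (y : ι) (b : F) : ℝ :=
  if y = i₀ then (if b = M + 1 then 1 else 0) else (if b = 0 then 1 else 0)

theorem success_digitEncoding_shiftDecoding [Fintype F] [Ring F] [Nontrivial F]
    (i₀ : ι) (x : ι → F) (y : ι) :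
    ∑ M, digitEncoding i₀ x M * ∑ b ∈ univ.filter (fun b => b ≠ x y), shiftDecoding i₀ M y b =
      1 - if y ≠ i₀ ∧ x y = 0 then 1 else 0 := by
  simp only [digitEncoding, ite_mul, one_mul, zero_mul, Fintype.sum_ite_eq']
  by_cases hy : y = i₀
  · simp [shiftDecoding, hy]
  · rcases eq_or_ne (x y) 0 with h | h <;> simp [shiftDecoding, hy, h, eq_comm]

theorem card_filter_apply_eq [Fintype ι] [Fintype F] (y : ι) (a : F) :
    (#{x : ι → F | x y = a} : ℝ) = Fintype.card F ^ Fintype.card ι / Fintype.card F := by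
  have h := Fintype.card_filter_piFinset_const_eq_of_mem (univ : Finset F) y (mem_univ a)
  simp only [Fintype.piFinset_univ, card_univ] at h
  have hι : 1 ≤ Fintype.card ι := Fintype.card_pos_iff.mpr ⟨y⟩
  have hF : (Fintype.card F : ℝ) ≠ 0 := by exact_mod_cast (Fintype.card_pos_iff.mpr ⟨a⟩).ne'
  rw [h, Nat.cast_pow, pow_sub₀ _ hF hι, pow_one, div_eq_mul_inv]

theorem successProbability_digitEncoding_shiftDecoding [Fintype ι] [Fintype F] [Ring F]
    [Nontrivial F] (i₀ : ι) :
    successProbability (digitEncoding i₀) (shiftDecoding (F := F) i₀) =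
      1 - (Fintype.card ι - 1) / (Fintype.card F * Fintype.card ι) := by
  have hι : (0 : ℝ) < Fintype.card ι := by exact_mod_cast Fintype.card_pos_iff.mpr ⟨i₀⟩
  set q : ℝ := Fintype.card F ^ Fintype.card ι / Fintype.card F
  have hfail : ∀ y, ∑ x : ι → F, (if y ≠ i₀ ∧ x y = 0 then (1 : ℝ) else 0) =
      q - if y = i₀ then q else 0 := by
    intro y
    by_cases hy : y = i₀
    · simp [hy]
    · simp [hy, sum_boole, card_filter_apply_eq, q]
  unfold successProbability
  simp only [success_digitEncoding_shiftDecoding, sum_sub_distrib, sum_const, card_univ,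
    Fintype.card_fun]
  rw [sum_comm]
  simp only [hfail, sum_sub_distrib, sum_const, card_univ, Fintype.sum_ite_eq', nsmul_eq_mul,
    Nat.cast_pow, q]
  field_simp

end Success

/-- **Achievability of the classical POREC bound.** For every integer `n ≥ 2` and every prime
`m`, the explicit classical strategy with message set `ZMod m` that deterministically sends
`M = x ⟨0, by omega⟩` (the first digit) and decodes by outputting `b = M + 1` when `y = 0` (the first
index) and `b = 0` otherwise, is parity-oblivious and achieves POREC success probability
exactly `1 - (n-1)/(m·n)`. -/
theorem porec_classical_achievable
    (n : ℕ) (hn : 2 ≤ n) (m : ℕ) (hm : Nat.Prime m) [NeZero m] :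
    (∀ r : Fin n → ZMod m,
        2 ≤ (Finset.univ.filter fun i => r i ≠ 0).card →
        ∀ M k k' : ZMod m,
          ∑ x ∈ Finset.univ.filter (fun x : Fin n → ZMod m => ∑ i, r i * x i = k),
            (if M = x ⟨0, by omega⟩ then (1 : ℝ) else 0) =
          ∑ x ∈ Finset.univ.filter (fun x : Fin n → ZMod m => ∑ i, r i * x i = k'),
            (if M = x ⟨0, by omega⟩ then (1 : ℝ) else 0)) ∧
    (1 / (n * m ^ n) : ℝ) *
        ∑ x : Fin n → ZMod m, ∑ y : Fin n, ∑ M : ZMod m,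
          (if M = x ⟨0, by omega⟩ then (1 : ℝ) else 0) *
            ∑ b ∈ Finset.univ.filter (fun b => b ≠ x y),
              (if y = (⟨0, by omega⟩ : Fin n) then (if b = M + 1 then (1 : ℝ) else 0)
               else (if b = 0 then (1 : ℝ) else 0))
      = 1 - ((n : ℝ) - 1) / (m * n) := by
  have : Fact m.Prime := ⟨hm⟩
  refine ⟨fun r hr M k k' =>
    sum_apply_filter_dotProduct_eq_of_two_le_card r hr _ (fun a => if M = a then 1 else 0) k k', ?_⟩
  have h := successProbability_digitEncoding_shiftDecoding (F := ZMod m) (⟨0, by omega⟩ : Fin n)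
  rwa [successProbability, Fintype.card_fin, ZMod.card] at h
end

section
/- Let m be a prime and let n : (ZMod m) × (ZMod m) → ℝ³ be a function such that for every pair (r_1, r_2) ∈ (ZMod m)² with r_1 ≠ 0 and r_2 ≠ 0 and all k, k′ ∈ ZMod m, Σ_{(x_1,x_2) : r_1 x_1 + r_2 x_2 = k} n(x_1,x_2) = Σ_{(x_1,x_2) : r_1 x_1 + r_2 x_2 = k′} n(x_1,x_2). Then there exist functions a, b : ZMod m → ℝ³ such that n(x_1,x_2) = a(x_1) + b(x_2) for all x_1, x_2 ∈ ZMod m. -/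
/-!
The parity classes of the mask `(1, r)` are the lines `x + r y = k`. Fix a point `(u, v)` of `F²`
and let `q = |F|`. The lines `x + r y = u + r v`, `r ∈ F`, all pass through `(u, v)` and cover every
point off the row `y = v` exactly once. For `r ≠ 0` obliviousness forces each of them to carry
`S / q`, `S` the total sum, while for `r = 0` the line is the column `x = u`. Counting the points on
these lines twice gives `q² n(u,v) + S = q (R u + C v)` with `R`, `C` the column and row sums, which
is additive in `u`, `v`.
-/

open Finset

section LineSums

variable {F V : Type*} [Fintype F] [DecidableEq F]

section CommRing

variable [CommRing F] [AddCommMonoid V]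

def lineSum (f : F → F → V) (r k : F) : V :=
  ∑ x ∈ univ.filter (fun x : F × F => x.1 + r * x.2 = k), f x.1 x.2

lemma lineSum_eq_sum (f : F → F → V) (r k : F) : lineSum f r k = ∑ y, f (k - r * y) y := by
  rw [lineSum, sum_filter, Fintype.sum_prod_type_right]
  refine sum_congr rfl fun y _ => ?_
  simp [← eq_sub_iff_add_eq]

lemma card_nsmul_lineSum {f : F → F → V} {r : F} (h : ∀ k k', lineSum f r k = lineSum f r k')
    (k : F) : Fintype.card F • lineSum f r k = ∑ x : F × F, f x.1 x.2 :=
  calc Fintype.card F • lineSum f r k = ∑ j, lineSum f r j := by simp [← h k]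
    _ = ∑ x : F × F, f x.1 x.2 := sum_fiberwise _ _ _

end CommRing

section Field

variable [Field F]

lemma sum_lineSum_through [AddCommMonoid V] (f : F → F → V) (u v : F) :
    ∑ r, lineSum f r (u + r * v) =
      Fintype.card F • f u v + ∑ y ∈ univ.erase v, ∑ x, f x y := by
  simp_rw [lineSum_eq_sum, add_sub_assoc, ← mul_sub]
  rw [sum_comm, ← add_sum_erase _ _ (mem_univ v)]
  congr 1
  · simp
  · refine sum_congr rfl fun y hy => ?_
    have hvy : v - y ≠ 0 := sub_ne_zero.mpr (ne_of_mem_erase hy).symm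
    exact Fintype.sum_bijective _ ((Equiv.addLeft u).bijective.comp (mulRight_bijective₀ _ hvy))
      _ _ fun _ => rfl

lemma card_sq_nsmul_add_sum_eq [AddCommGroup V] {f : F → F → V}
    (h : ∀ r ≠ 0, ∀ k k', lineSum f r k = lineSum f r k') (u v : F) :
    Fintype.card F ^ 2 • f u v + ∑ x : F × F, f x.1 x.2 =
      Fintype.card F • (∑ y, f u y + ∑ x, f x v) := by
  set q := Fintype.card F
  set S := ∑ x : F × F, f x.1 x.2
  have hcols : ∑ y ∈ univ.erase v, ∑ x, f x y + ∑ x, f x v = S := by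
    rw [sum_erase_add _ _ (mem_univ v)]
    exact (Fintype.sum_prod_type_right' f).symm
  have hlines : ∑ r, q • lineSum f r (u + r * v) =
      q • ∑ y, f u y + ∑ r ∈ univ.erase (0 : F), S := by
    rw [← add_sum_erase _ _ (mem_univ 0)]
    congr 1
    · simp [lineSum_eq_sum]
    · exact sum_congr rfl fun r hr => card_nsmul_lineSum (h r (ne_of_mem_erase hr)) _
  have hconst : ∑ r ∈ univ.erase (0 : F), S + S = q • S := by
    rw [sum_erase_add _ _ (mem_univ 0), sum_const, card_univ]
  rw [← smul_sum, sum_lineSum_through] at hlines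
  linear_combination (norm := module) hlines + hconst - q • hcols

theorem exists_add_decomposition_of_lineSum_eq {K : Type*} [Field K] [CharZero K]
    [AddCommGroup V] [Module K V] {f : F → F → V}
    (h : ∀ r ≠ 0, ∀ k k', lineSum f r k = lineSum f r k') :
    ∃ a b : F → V, ∀ x y, f x y = a x + b y := by
  set q : K := (Fintype.card F : K) with hq_def
  have hq : q ≠ 0 := Nat.cast_ne_zero.mpr Fintype.card_ne_zero
  refine ⟨fun x => q⁻¹ • ∑ y, f x y,
    fun y => q⁻¹ • ∑ x, f x y - (q ^ 2)⁻¹ • ∑ p : F × F, f p.1 p.2, fun u v => ?_⟩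
  have key := card_sq_nsmul_add_sum_eq h u v
  rw [← Nat.cast_smul_eq_nsmul K, ← Nat.cast_smul_eq_nsmul K, Nat.cast_pow, ← hq_def] at key
  linear_combination (norm := skip) (q ^ 2)⁻¹ • key
  match_scalars <;> field_simp <;> ring

end Field

end LineSums

/-- **Additive Bloch structure lemma.** Let `m` be prime and `nv : (ZMod m)² → ℝ³` such that
for every mask `(r₁, r₂)` with both components nonzero, the sums of `nv` over the parity
classes `{(x₁,x₂) : r₁x₁ + r₂x₂ = k}` agree for all `k`. Then `nv` decomposes additively into
single-digit contributions. -/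
theorem additive_bloch_structure
    (m : ℕ) (hm : Nat.Prime m) [NeZero m]
    (nv : ZMod m → ZMod m → EuclideanSpace ℝ (Fin 3))
    (hPO : ∀ r₁ r₂ : ZMod m, r₁ ≠ 0 → r₂ ≠ 0 → ∀ k k' : ZMod m,
      ∑ x ∈ Finset.univ.filter (fun x : ZMod m × ZMod m => r₁ * x.1 + r₂ * x.2 = k),
        nv x.1 x.2 =
      ∑ x ∈ Finset.univ.filter (fun x : ZMod m × ZMod m => r₁ * x.1 + r₂ * x.2 = k'),
        nv x.1 x.2) :
    ∃ a b : ZMod m → EuclideanSpace ℝ (Fin 3),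
      ∀ x₁ x₂ : ZMod m, nv x₁ x₂ = a x₁ + b x₂ := by
  have := Fact.mk hm
  refine exists_add_decomposition_of_lineSum_eq (K := ℝ) fun r hr k k' => ?_
  simpa only [lineSum, one_mul] using hPO 1 r one_ne_zero hr k k'
end

section
/- Define f : ZMod 3 → ℝ by f(0) = −1, f(1) = 1, f(2) = 0, and set ρ_{x_1 x_2} = (1/2)(I + (f(x_2)/√2)·σ_x + (f(x_1)/√2)·σ_z) for (x_1,x_2) ∈ (ZMod 3)², together with the measurements M_{0|1} = (1/2)(I + σ_z), M_{1|1} = (1/2)(I − σ_z), M_{2|1} = 0, M_{0|2} = (1/2)(I + σ_x), M_{1|2} = (1/2)(I − σ_x), M_{2|2} = 0. Then each ρ_{x_1 x_2} is positive semidefinite with trace 1, each {M_{b|y}} is a POVM, the full parity-obliviousness constraints hold, and the POREC success probability of this strategy equals 2/3 + 1/(3·√2). -/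
/-!
Every state and every nonzero effect is a Bloch matrix `(1/2)(I + u σ_x + v σ_z)`: it has trace 1,
is positive semidefinite as soon as `u² + v² ≤ 1`, and `Re Tr` of a product of two of them is
`(1 + u u' + v v') / 2`. Parity-obliviousness holds because `ρ_{x₁x₂}` is a function of `x₁` plus a
function of `x₂`, while for a mask with unit coefficients every line `r₁ x₁ + r₂ x₂ = k` meets each
row and each column of `(ZMod 3)²` exactly once. Since each measurement sums to `I`, the
probability of answering some `b ≠ x_y` is `1 - Tr(ρ_x M_{x_y|y})`, and the last term is
`(1 - 1/√2)/2` for `x_y ≠ 2` and `0` for `x_y = 2`.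
-/

open Finset
open scoped ComplexOrder

noncomputable section

/-- Pauli matrix `σ_x`. -/
def sigmaX : Matrix (Fin 2) (Fin 2) ℂ := !![0, 1; 1, 0]

/-- Pauli matrix `σ_z`. -/
def sigmaZ : Matrix (Fin 2) (Fin 2) ℂ := !![1, 0; 0, -1]

/-- The sign function `f(0) = -1`, `f(1) = 1`, `f(2) = 0` on `ZMod 3`. -/
def fSign : ZMod 3 → ℝ := fun k => if k = 1 then 1 else if k = 0 then -1 else 0

/-- The optimal qubit states for the `(2,3)` POREC. -/
def porecState (x₁ x₂ : ZMod 3) : Matrix (Fin 2) (Fin 2) ℂ :=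
  (1 / 2 : ℝ) • ((1 : Matrix (Fin 2) (Fin 2) ℂ)
    + (fSign x₂ / Real.sqrt 2) • sigmaX + (fSign x₁ / Real.sqrt 2) • sigmaZ)

/-- The optimal measurement for `y = 1`: `σ_z` projectors, third outcome null. -/
def porecMeas₁ (b : ZMod 3) : Matrix (Fin 2) (Fin 2) ℂ :=
  if b = 0 then (1 / 2 : ℝ) • ((1 : Matrix (Fin 2) (Fin 2) ℂ) + sigmaZ)
  else if b = 1 then (1 / 2 : ℝ) • ((1 : Matrix (Fin 2) (Fin 2) ℂ) - sigmaZ)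
  else 0

/-- The optimal measurement for `y = 2`: `σ_x` projectors, third outcome null. -/
def porecMeas₂ (b : ZMod 3) : Matrix (Fin 2) (Fin 2) ℂ :=
  if b = 0 then (1 / 2 : ℝ) • ((1 : Matrix (Fin 2) (Fin 2) ℂ) + sigmaX)
  else if b = 1 then (1 / 2 : ℝ) • ((1 : Matrix (Fin 2) (Fin 2) ℂ) - sigmaX)
  else 0

def blochMatrix (u v : ℝ) : Matrix (Fin 2) (Fin 2) ℂ :=
  (1 / 2 : ℝ) • ((1 : Matrix (Fin 2) (Fin 2) ℂ) + u • sigmaX + v • sigmaZ)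

lemma blochMatrix_eq_of (u v : ℝ) : blochMatrix u v =
    !![(((1 + v) / 2 : ℝ) : ℂ), ((u / 2 : ℝ) : ℂ); ((u / 2 : ℝ) : ℂ), (((1 - v) / 2 : ℝ) : ℂ)] := by
  ext i j
  fin_cases i <;> fin_cases j <;>
    simp [blochMatrix, sigmaX, sigmaZ, Complex.ext_iff] <;> ring

lemma trace_blochMatrix (u v : ℝ) : (blochMatrix u v).trace = 1 := by
  rw [blochMatrix_eq_of, Matrix.trace_fin_two_of]
  push_cast; ring

lemma re_trace_blochMatrix_mul (u v u' v' : ℝ) :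
    (blochMatrix u v * blochMatrix u' v').trace.re = (1 + u * u' + v * v') / 2 := by
  simp only [blochMatrix_eq_of, Matrix.mul_fin_two, Matrix.trace_fin_two_of]
  simp only [Complex.add_re, ← Complex.ofReal_mul, Complex.ofReal_re]
  ring

lemma blochMatrix_add_blochMatrix_neg (u v : ℝ) :
    blochMatrix u v + blochMatrix (-u) (-v) = 1 := by
  rw [blochMatrix_eq_of, blochMatrix_eq_of]
  ext i j
  fin_cases i <;> fin_cases j <;> simp <;> ring

lemma blochMatrix_posSemidef {u v : ℝ} (h : u ^ 2 + v ^ 2 ≤ 1) :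
    (blochMatrix u v).PosSemidef := by
  refine Matrix.PosSemidef.of_dotProduct_mulVec_nonneg ?_ fun x => ?_
  · rw [blochMatrix_eq_of]
    ext i j
    fin_cases i <;> fin_cases j <;> simp [Matrix.conjTranspose_apply]
  · set p := Complex.normSq (x 0)
    set q := Complex.normSq (x 1)
    set r := (star (x 0) * x 1).re
    have hform : dotProduct (star x) ((blochMatrix u v).mulVec x) =
        (((p + q + 2 * u * r + v * (p - q)) / 2 : ℝ) : ℂ) := by
      simp [blochMatrix_eq_of, dotProduct, Matrix.mulVec, Fin.sum_univ_two, p, q, r,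
        Complex.normSq, Complex.ext_iff, Complex.mul_re, Complex.mul_im]
      constructor <;> ring
    have hr : r ^ 2 ≤ p * q := by
      have : Complex.normSq (star (x 0) * x 1) = p * q := by
        simp [Complex.normSq_mul, p, q]
      nlinarith [sq_nonneg (star (x 0) * x 1).im, Complex.normSq_apply (star (x 0) * x 1)]
    -- Cauchy–Schwarz, using `4 r ^ 2 + (p - q) ^ 2 ≤ (p + q) ^ 2`
    have hbound : (2 * u * r + v * (p - q)) ^ 2 ≤ (p + q) ^ 2 := by
      nlinarith [sq_nonneg (u * (p - q) - 2 * v * r), sq_nonneg (p - q), sq_nonneg r]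
    rw [hform, Complex.zero_le_real]
    have hpq : 0 ≤ p + q := add_nonneg (Complex.normSq_nonneg _) (Complex.normSq_nonneg _)
    linarith [(abs_le_of_sq_le_sq' hbound hpq).1]

lemma sum_ite_add_mul_eq {R M : Type*} [Ring R] [Fintype R] [DecidableEq R] [AddCommMonoid M]
    {b : R} (hb : IsUnit b) (c k : R) (m : M) :
    ∑ y : R, (if c + b * y = k then m else 0) = m := by
  obtain ⟨b, rfl⟩ := hb
  have hsolve (y : R) : c + b * y = k ↔ y = ↑b⁻¹ * (k - c) := by
    constructor
    · rintro rfl; simp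
    · rintro rfl; simp
  simp only [hsolve, Finset.sum_ite_eq', Finset.mem_univ, if_true]

theorem sum_filter_mul_add_mul_eq_of_separable {R M : Type*} [CommRing R] [Fintype R]
    [DecidableEq R] [AddCommMonoid M] {a b : R} (ha : IsUnit a) (hb : IsUnit b)
    {φ : R × R → M} {f g : R → M} (hφ : ∀ x, φ x = f x.1 + g x.2) (k : R) :
    ∑ x ∈ univ.filter (fun x : R × R => a * x.1 + b * x.2 = k), φ x = ∑ t, f t + ∑ t, g t := by
  rw [sum_congr rfl fun x _ => hφ x, sum_add_distrib, sum_filter, sum_filter,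
    Fintype.sum_prod_type, Fintype.sum_prod_type_right]
  simp only [sum_ite_add_mul_eq hb]
  simp only [add_comm (a * _), sum_ite_add_mul_eq ha]

lemma sum_filter_ne_re_trace_mul {n ι : Type*} [Fintype n] [DecidableEq n] [Fintype ι]
    [DecidableEq ι]
    {ρ : Matrix n n ℂ} (hρ : ρ.trace = 1) {M : ι → Matrix n n ℂ} (hM : ∑ b, M b = 1) (a : ι) :
    ∑ b ∈ univ.filter (fun b => b ≠ a), (ρ * M b).trace.re = 1 - (ρ * M a).trace.re := by
  rw [filter_ne', sum_erase_eq_sub (mem_univ a), ← Complex.re_sum, ← Matrix.trace_sum,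
    ← Matrix.mul_sum, hM, Matrix.mul_one, hρ, Complex.one_re]

lemma sum_zmod_three {M : Type*} [AddCommMonoid M] (g : ZMod 3 → M) :
    ∑ b : ZMod 3, g b = g 0 + g 1 + g 2 := Fin.sum_univ_three g

lemma forall_zmod_three {P : ZMod 3 → Prop} (h0 : P 0) (h1 : P 1) (h2 : P 2) (b : ZMod 3) :
    P b := by
  fin_cases b
  exacts [h0, h1, h2]

lemma porecState_eq_blochMatrix (x₁ x₂ : ZMod 3) :
    porecState x₁ x₂ = blochMatrix (fSign x₂ / Real.sqrt 2) (fSign x₁ / Real.sqrt 2) := rfl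

@[simp] lemma fSign_zero : fSign 0 = -1 := by simp [fSign]
@[simp] lemma fSign_one : fSign 1 = 1 := by simp [fSign]
@[simp] lemma fSign_two : fSign 2 = 0 := by rw [fSign, if_neg (by decide), if_neg (by decide)]

lemma fSign_sq_le_one (k : ZMod 3) : fSign k ^ 2 ≤ 1 := by
  unfold fSign; split_ifs <;> norm_num

lemma trace_porecState (x₁ x₂ : ZMod 3) : (porecState x₁ x₂).trace = 1 :=
  trace_blochMatrix _ _

lemma porecState_posSemidef (x₁ x₂ : ZMod 3) : (porecState x₁ x₂).PosSemidef := by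
  apply blochMatrix_posSemidef
  rw [div_pow, div_pow, Real.sq_sqrt zero_le_two]
  linarith [fSign_sq_le_one x₁, fSign_sq_le_one x₂]

lemma sum_filter_porecState_eq {a b : ZMod 3} (ha : IsUnit a) (hb : IsUnit b) (k k' : ZMod 3) :
    ∑ x ∈ univ.filter (fun x : ZMod 3 × ZMod 3 => a * x.1 + b * x.2 = k), porecState x.1 x.2 =
      ∑ x ∈ univ.filter (fun x : ZMod 3 × ZMod 3 => a * x.1 + b * x.2 = k'),
        porecState x.1 x.2 := by
  let f (t : ZMod 3) : Matrix (Fin 2) (Fin 2) ℂ :=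
    (1 / 2 : ℝ) • (1 + (fSign t / Real.sqrt 2) • sigmaZ)
  let g (t : ZMod 3) : Matrix (Fin 2) (Fin 2) ℂ :=
    (1 / 2 : ℝ) • ((fSign t / Real.sqrt 2) • sigmaX)
  have hsep (x : ZMod 3 × ZMod 3) : porecState x.1 x.2 = f x.1 + g x.2 := by
    rw [porecState, ← smul_add]
    abel_nf
  rw [sum_filter_mul_add_mul_eq_of_separable ha hb hsep,
    sum_filter_mul_add_mul_eq_of_separable ha hb hsep]

lemma porecMeas₁_zero : porecMeas₁ 0 = blochMatrix 0 1 := by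
  simp [porecMeas₁, blochMatrix]
lemma porecMeas₁_one : porecMeas₁ 1 = blochMatrix 0 (-1) := by
  simp [porecMeas₁, blochMatrix, sub_eq_add_neg]
lemma porecMeas₁_two : porecMeas₁ 2 = 0 := by
  rw [porecMeas₁, if_neg (by decide), if_neg (by decide)]
lemma porecMeas₂_zero : porecMeas₂ 0 = blochMatrix 1 0 := by
  simp [porecMeas₂, blochMatrix]
lemma porecMeas₂_one : porecMeas₂ 1 = blochMatrix (-1) 0 := by
  simp [porecMeas₂, blochMatrix, sub_eq_add_neg]
lemma porecMeas₂_two : porecMeas₂ 2 = 0 := by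
  rw [porecMeas₂, if_neg (by decide), if_neg (by decide)]

lemma porecMeas₁_posSemidef : ∀ b, (porecMeas₁ b).PosSemidef :=
  forall_zmod_three
    (porecMeas₁_zero ▸ blochMatrix_posSemidef (by norm_num))
    (porecMeas₁_one ▸ blochMatrix_posSemidef (by norm_num))
    (porecMeas₁_two ▸ .zero)

lemma porecMeas₂_posSemidef : ∀ b, (porecMeas₂ b).PosSemidef :=
  forall_zmod_three
    (porecMeas₂_zero ▸ blochMatrix_posSemidef (by norm_num))
    (porecMeas₂_one ▸ blochMatrix_posSemidef (by norm_num))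
    (porecMeas₂_two ▸ .zero)

lemma sum_porecMeas₁ : ∑ b, porecMeas₁ b = 1 := by
  rw [sum_zmod_three, porecMeas₁_zero, porecMeas₁_one, porecMeas₁_two, add_zero]
  simpa using blochMatrix_add_blochMatrix_neg 0 1

lemma sum_porecMeas₂ : ∑ b, porecMeas₂ b = 1 := by
  rw [sum_zmod_three, porecMeas₂_zero, porecMeas₂_one, porecMeas₂_two, add_zero]
  simpa using blochMatrix_add_blochMatrix_neg 1 0

lemma porec_success_probability :
    (1 / 18 : ℝ) *
        ∑ x : ZMod 3 × ZMod 3,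
          ((∑ b ∈ Finset.univ.filter (fun b => b ≠ x.1),
              ((porecState x.1 x.2 * porecMeas₁ b).trace).re) +
           (∑ b ∈ Finset.univ.filter (fun b => b ≠ x.2),
              ((porecState x.1 x.2 * porecMeas₂ b).trace).re))
      = 2 / 3 + 1 / (3 * Real.sqrt 2) := by
  simp only [sum_filter_ne_re_trace_mul (trace_porecState _ _) sum_porecMeas₁,
    sum_filter_ne_re_trace_mul (trace_porecState _ _) sum_porecMeas₂]
  simp only [Fintype.sum_prod_type, sum_zmod_three, porecState_eq_blochMatrix, porecMeas₁_zero,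
    porecMeas₁_one, porecMeas₁_two, porecMeas₂_zero, porecMeas₂_one, porecMeas₂_two,
    mul_zero, Matrix.trace_zero, Complex.zero_re, re_trace_blochMatrix_mul, fSign_zero,
    fSign_one, fSign_two]
  field_simp
  ring

/-- **Exact qubit optimum for the (2,3) POREC (achievability).** The explicit strategy with
states `ρ_{x₁x₂} = (1/2)(I + (f(x₂)/√2)σ_x + (f(x₁)/√2)σ_z)` and complementary Pauli
measurements is a valid, fully parity-oblivious qubit strategy achieving POREC success
probability exactly `2/3 + 1/(3√2)`. -/
theorem porec23_qubit_optimal_strategy :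
    (∀ x₁ x₂ : ZMod 3, (porecState x₁ x₂).PosSemidef ∧ (porecState x₁ x₂).trace = 1) ∧
    (∀ b : ZMod 3, (porecMeas₁ b).PosSemidef) ∧ (∑ b : ZMod 3, porecMeas₁ b = 1) ∧
    (∀ b : ZMod 3, (porecMeas₂ b).PosSemidef) ∧ (∑ b : ZMod 3, porecMeas₂ b = 1) ∧
    (∀ k k' : ZMod 3,
      ∑ x ∈ Finset.univ.filter (fun x : ZMod 3 × ZMod 3 => x.1 + x.2 = k),
        porecState x.1 x.2 =
      ∑ x ∈ Finset.univ.filter (fun x : ZMod 3 × ZMod 3 => x.1 + x.2 = k'),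
        porecState x.1 x.2) ∧
    (∀ k k' : ZMod 3,
      ∑ x ∈ Finset.univ.filter (fun x : ZMod 3 × ZMod 3 => x.1 + 2 * x.2 = k),
        porecState x.1 x.2 =
      ∑ x ∈ Finset.univ.filter (fun x : ZMod 3 × ZMod 3 => x.1 + 2 * x.2 = k'),
        porecState x.1 x.2) ∧
    (1 / 18 : ℝ) *
        ∑ x : ZMod 3 × ZMod 3,
          ((∑ b ∈ Finset.univ.filter (fun b => b ≠ x.1),
              ((porecState x.1 x.2 * porecMeas₁ b).trace).re) +
           (∑ b ∈ Finset.univ.filter (fun b => b ≠ x.2),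
              ((porecState x.1 x.2 * porecMeas₂ b).trace).re))
      = 2 / 3 + 1 / (3 * Real.sqrt 2) := by
  have isUnit_two : IsUnit (2 : ZMod 3) := IsUnit.of_mul_eq_one 2 rfl
  refine ⟨fun x₁ x₂ => ⟨porecState_posSemidef x₁ x₂, trace_porecState x₁ x₂⟩,
    porecMeas₁_posSemidef, sum_porecMeas₁, porecMeas₂_posSemidef, sum_porecMeas₂,
    fun k k' => ?_, fun k k' => ?_, porec_success_probability⟩
  · simpa only [one_mul] using sum_filter_porecState_eq isUnit_one isUnit_one k k'
  · simpa only [one_mul] using sum_filter_porecState_eq isUnit_one isUnit_two k k'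

end
end

section
/- Let t, s : Fin 3 → ℝ be nonnegative with Σ_i t_i = 2 and Σ_j s_j = 2, let m̂_0, m̂_1, m̂_2 and n̂_0, n̂_1, n̂_2 be unit vectors in ℝ³ with Σ_i t_i m̂_i = 0 and Σ_j s_j n̂_j = 0, and let λ, μ ≥ 0 be such that ‖λ t_i m̂_i + μ s_j n̂_j‖ ≤ 1 for all i, j ∈ {0,1,2}. Then λ·Σ_i t_i² + μ·Σ_j s_j² ≤ 2√2. -/
open Finset

/-!
Normalise to probability weights `pᵢ = tᵢ/2`, `qⱼ = sⱼ/2` and put `aᵢ = λ tᵢ m̂ᵢ`,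
`bⱼ = μ sⱼ n̂ⱼ`. Averaging `‖aᵢ + bⱼ‖² ≤ 1` over `p ⊗ q` and bounding the cross term by
`2⟪E a, E b⟫ ≥ -‖E a‖² - ‖E b‖²` gives `Var a + Var b ≤ 1`. Since `E m̂ = 0` and the `m̂ᵢ` are
unit vectors, `E a = E[(λt - E[λt]) m̂]` has squared norm at most `Var (λt)` by Jensen, so
`Var a = E[(λt)²] - ‖E a‖² ≥ (E[λt])² = (λ ∑ tᵢ² / 2)²`. Hence `x² + y² ≤ 4` for
`x = λ ∑ tᵢ²`, `y = μ ∑ sⱼ²`, and `x + y ≤ 2√2`.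
-/

variable {ι κ E : Type*} [Fintype ι] [Fintype κ] [NormedAddCommGroup E] [InnerProductSpace ℝ E]

def weightedVariance (p : ι → ℝ) (a : ι → E) : ℝ :=
  ∑ i, p i * ‖a i‖ ^ 2 - ‖∑ i, p i • a i‖ ^ 2

theorem norm_sum_smul_sq_le {p : ι → ℝ} (hp : ∀ i, 0 ≤ p i) (hp_sum : ∑ i, p i = 1)
    (v : ι → E) : ‖∑ i, p i • v i‖ ^ 2 ≤ ∑ i, p i * ‖v i‖ ^ 2 :=
  (convexOn_univ_norm.pow (fun x _ => norm_nonneg x) 2).map_sum_le (fun i _ => hp i) hp_sum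
    (fun i _ => Set.mem_univ (v i))

theorem sum_sum_mul_norm_add_sq {p : ι → ℝ} {q : κ → ℝ} (hp_sum : ∑ i, p i = 1)
    (hq_sum : ∑ j, q j = 1) (a : ι → E) (b : κ → E) :
    ∑ i, ∑ j, p i * q j * ‖a i + b j‖ ^ 2 =
      ∑ i, p i * ‖a i‖ ^ 2 + ∑ j, q j * ‖b j‖ ^ 2
        + 2 * inner ℝ (∑ i, p i • a i) (∑ j, q j • b j) := by
  have h_left : ∑ i, ∑ j, p i * q j * ‖a i‖ ^ 2 = ∑ i, p i * ‖a i‖ ^ 2 := by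
    simp only [← sum_mul, ← mul_sum, hq_sum, mul_one]
  have h_right : ∑ i, ∑ j, p i * q j * ‖b j‖ ^ 2 = ∑ j, q j * ‖b j‖ ^ 2 := by
    rw [sum_comm]
    simp only [mul_assoc, ← sum_mul, hp_sum, one_mul]
  have h_cross : ∑ i, ∑ j, p i * q j * (2 * inner ℝ (a i) (b j)) =
      2 * inner ℝ (∑ i, p i • a i) (∑ j, q j • b j) := by
    rw [sum_inner, mul_sum]
    refine sum_congr rfl fun i _ => ?_
    rw [inner_sum, mul_sum]
    exact sum_congr rfl fun j _ => by rw [real_inner_smul_left, real_inner_smul_right]; ring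
  rw [← h_left, ← h_right, ← h_cross, ← sum_add_distrib, ← sum_add_distrib]
  refine sum_congr rfl fun i _ => ?_
  rw [← sum_add_distrib, ← sum_add_distrib]
  exact sum_congr rfl fun j _ => by rw [norm_add_sq_real]; ring

theorem weightedVariance_add_weightedVariance_le_one {p : ι → ℝ} {q : κ → ℝ}
    (hp : ∀ i, 0 ≤ p i) (hq : ∀ j, 0 ≤ q j) (hp_sum : ∑ i, p i = 1) (hq_sum : ∑ j, q j = 1)
    {a : ι → E} {b : κ → E} (hab : ∀ i j, ‖a i + b j‖ ≤ 1) :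
    weightedVariance p a + weightedVariance q b ≤ 1 := by
  have h_avg : ∑ i, ∑ j, p i * q j * ‖a i + b j‖ ^ 2 ≤ 1 := calc
    _ ≤ ∑ i, ∑ j, p i * q j :=
      sum_le_sum fun i _ => sum_le_sum fun j _ => mul_le_of_le_one_right
        (mul_nonneg (hp i) (hq j)) (pow_le_one₀ (norm_nonneg _) (hab i j))
    _ = 1 := by simp only [← mul_sum, ← sum_mul, hp_sum, hq_sum, one_mul]
  have h_cross := norm_add_sq_real (∑ i, p i • a i) (∑ j, q j • b j)
  rw [sum_sum_mul_norm_add_sq hp_sum hq_sum] at h_avg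
  unfold weightedVariance
  linarith [sq_nonneg ‖∑ i, p i • a i + ∑ j, q j • b j‖]

theorem sq_sum_mul_le_weightedVariance {p : ι → ℝ} (hp : ∀ i, 0 ≤ p i)
    (hp_sum : ∑ i, p i = 1) {m : ι → E} (hm : ∀ i, ‖m i‖ = 1) (hm_sum : ∑ i, p i • m i = 0)
    (τ : ι → ℝ) : (∑ i, p i * τ i) ^ 2 ≤ weightedVariance p (fun i => τ i • m i) := by
  set c := ∑ i, p i * τ i with hc
  have h_center : ∑ i, p i • τ i • m i = ∑ i, p i • (τ i - c) • m i := by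
    simp only [sub_smul, smul_sub, sum_sub_distrib, smul_comm (p _) c, ← smul_sum, hm_sum,
      smul_zero, sub_zero]
  have h_jensen := norm_sum_smul_sq_le hp hp_sum (fun i => (τ i - c) • m i)
  have h_var : ∑ i, p i * (τ i - c) ^ 2 = ∑ i, p i * τ i ^ 2 - c ^ 2 := by
    have h_expand : ∑ i, p i * (τ i - c) ^ 2 =
        ∑ i, p i * τ i ^ 2 - 2 * c * ∑ i, p i * τ i + c ^ 2 * ∑ i, p i := by
      simp only [mul_sum, ← sum_sub_distrib, ← sum_add_distrib]
      exact sum_congr rfl fun i _ => by ring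
    rw [h_expand, hp_sum, ← hc]
    ring
  simp only [norm_smul, hm, mul_one, Real.norm_eq_abs, sq_abs] at h_jensen
  unfold weightedVariance
  simp only [norm_smul, hm, mul_one, Real.norm_eq_abs, sq_abs, h_center]
  linarith

theorem add_le_two_mul_sqrt_two {x y : ℝ} (h : x ^ 2 + y ^ 2 ≤ 4) : x + y ≤ 2 * √2 := by
  have h8 : √8 = 2 * √2 := by
    rw [show (8 : ℝ) = 2 ^ 2 * 2 by norm_num, Real.sqrt_mul' _ zero_le_two,
      Real.sqrt_sq zero_le_two]
  rw [← h8]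
  exact Real.le_sqrt_of_sq_le (by nlinarith [sq_nonneg (x - y)])

theorem porec_core_F_bound_general
    (t s : Fin 3 → ℝ)
    (ht_nonneg : ∀ i, 0 ≤ t i) (hs_nonneg : ∀ j, 0 ≤ s j)
    (ht_sum : ∑ i, t i = 2) (hs_sum : ∑ j, s j = 2)
    (mhat nhat : Fin 3 → EuclideanSpace ℝ (Fin 3))
    (hm_unit : ∀ i, ‖mhat i‖ = 1) (hn_unit : ∀ j, ‖nhat j‖ = 1)
    (hm_sum : ∑ i, t i • mhat i = 0) (hn_sum : ∑ j, s j • nhat j = 0)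
    (lam mu : ℝ)
    (hball : ∀ i j, ‖(lam * t i) • mhat i + (mu * s j) • nhat j‖ ≤ 1) :
    lam * (∑ i, (t i) ^ 2) + mu * (∑ j, (s j) ^ 2) ≤ 2 * Real.sqrt 2 := by
  have hp : ∀ i, 0 ≤ t i / 2 := fun i => div_nonneg (ht_nonneg i) zero_le_two
  have hq : ∀ j, 0 ≤ s j / 2 := fun j => div_nonneg (hs_nonneg j) zero_le_two
  have hp_sum : ∑ i, t i / 2 = 1 := by rw [← sum_div, ht_sum, div_self two_ne_zero]
  have hq_sum : ∑ j, s j / 2 = 1 := by rw [← sum_div, hs_sum, div_self two_ne_zero]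
  have hpm : ∑ i, (t i / 2) • mhat i = 0 := by
    simp only [div_eq_inv_mul, mul_smul, ← smul_sum, hm_sum, smul_zero]
  have hqn : ∑ j, (s j / 2) • nhat j = 0 := by
    simp only [div_eq_inv_mul, mul_smul, ← smul_sum, hn_sum, smul_zero]
  have h_mean : ∀ (c : ℝ) (w : Fin 3 → ℝ),
      ∑ i, w i / 2 * (c * w i) = c * (∑ i, w i ^ 2) / 2 := by
    intro c w
    rw [mul_sum, sum_div]
    exact sum_congr rfl fun i _ => by ring
  have h_var_t := sq_sum_mul_le_weightedVariance hp hp_sum hm_unit hpm (fun i => lam * t i)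
  have h_var_s := sq_sum_mul_le_weightedVariance hq hq_sum hn_unit hqn (fun j => mu * s j)
  have h_var := weightedVariance_add_weightedVariance_le_one hp hq hp_sum hq_sum hball
  rw [h_mean] at h_var_t h_var_s
  exact add_le_two_mul_sqrt_two (by linarith)

/-- **Core bound `|F| ≤ 2√2` for extremal qubit POVM pairs.** Let `t, s : Fin 3 → ℝ` be
nonnegative weights summing to `2`, `m̂ᵢ, n̂ⱼ` unit vectors in `ℝ³` with `∑ tᵢ m̂ᵢ = 0` and
`∑ sⱼ n̂ⱼ = 0`, and `λ, μ ≥ 0` such that `‖λ tᵢ m̂ᵢ + μ sⱼ n̂ⱼ‖ ≤ 1` for all `i, j`. Then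
`λ ∑ tᵢ² + μ ∑ sⱼ² ≤ 2√2`. -/
theorem porec_core_F_bound
    (t s : Fin 3 → ℝ)
    (ht_nonneg : ∀ i, 0 ≤ t i) (hs_nonneg : ∀ j, 0 ≤ s j)
    (ht_sum : ∑ i, t i = 2) (hs_sum : ∑ j, s j = 2)
    (mhat nhat : Fin 3 → EuclideanSpace ℝ (Fin 3))
    (hm_unit : ∀ i, ‖mhat i‖ = 1) (hn_unit : ∀ j, ‖nhat j‖ = 1)
    (hm_sum : ∑ i, t i • mhat i = 0) (hn_sum : ∑ j, s j • nhat j = 0)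
    (lam mu : ℝ) (hlam : 0 ≤ lam) (hmu : 0 ≤ mu)
    (hball : ∀ i j, ‖(lam * t i) • mhat i + (mu * s j) • nhat j‖ ≤ 1) :
    lam * (∑ i, (t i) ^ 2) + mu * (∑ j, (s j) ^ 2) ≤ 2 * Real.sqrt 2 :=
  porec_core_F_bound_general t s ht_nonneg hs_nonneg ht_sum hs_sum mhat nhat hm_unit hn_unit hm_sum
    hn_sum lam mu hball
end

section
/- Let a_0, a_1, b_0, b_1 be vectors in a real inner product space such that ‖a_i + b_j‖ ≤ 1 for all i, j ∈ {0,1}. Then ‖a_0 − a_1‖² + ‖b_0 − b_1‖² ≤ 4, and consequently ‖a_0 − a_1‖ + ‖b_0 − b_1‖ ≤ 2√2. -/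
/-! The differences `x = a₀ - a₁`, `y = b₀ - b₁` satisfy `x + y = (a₀ + b₀) - (a₁ + b₁)` and
`x - y = (a₀ + b₁) - (a₁ + b₀)`, so both have norm at most `2`. The parallelogram law then
gives `2 (‖x‖² + ‖y‖²) = ‖x + y‖² + ‖x - y‖² ≤ 8`, and `(s + t)² ≤ 2 (s² + t²)` turns this into
the bound on `‖x‖ + ‖y‖`. -/

theorem add_le_mul_sqrt_two_of_sq_add_sq_le {s t r : ℝ} (hr : 0 ≤ r)
    (h : s ^ 2 + t ^ 2 ≤ r ^ 2) : s + t ≤ r * √2 := by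
  have hsq : (s + t) ^ 2 ≤ (r * √2) ^ 2 := by
    rw [mul_pow, Real.sq_sqrt zero_le_two]
    nlinarith [sq_nonneg (s - t)]
  exact (abs_le_of_sq_le_sq' hsq (by positivity)).2

theorem sq_norm_add_sq_norm_le_of_norm_add_le_of_norm_sub_le
    {E : Type*} [NormedAddCommGroup E] [InnerProductSpace ℝ E] {x y : E} {c : ℝ}
    (hadd : ‖x + y‖ ≤ c) (hsub : ‖x - y‖ ≤ c) :
    ‖x‖ ^ 2 + ‖y‖ ^ 2 ≤ c ^ 2 := by
  have hpar := parallelogram_law_with_norm ℝ x y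
  have := pow_le_pow_left₀ (norm_nonneg _) hadd 2
  have := pow_le_pow_left₀ (norm_nonneg _) hsub 2
  linarith

theorem norm_sub_le_two_of_norm_le_one {E : Type*} [SeminormedAddCommGroup E] {u v : E}
    (hu : ‖u‖ ≤ 1) (hv : ‖v‖ ≤ 1) : ‖u - v‖ ≤ 2 := by
  linarith [norm_sub_le u v]

/-- **Parallelogram bound for Bloch vectors.** If `a₀, a₁, b₀, b₁` are vectors in a real
inner product space with `‖aᵢ + bⱼ‖ ≤ 1` for all `i, j ∈ {0,1}`, then
`‖a₀ - a₁‖² + ‖b₀ - b₁‖² ≤ 4` and consequently `‖a₀ - a₁‖ + ‖b₀ - b₁‖ ≤ 2√2`. -/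
theorem parallelogram_bloch_bound
    {E : Type*} [NormedAddCommGroup E] [InnerProductSpace ℝ E]
    (a b : Fin 2 → E)
    (h : ∀ i j : Fin 2, ‖a i + b j‖ ≤ 1) :
    ‖a 0 - a 1‖ ^ 2 + ‖b 0 - b 1‖ ^ 2 ≤ 4 ∧
    ‖a 0 - a 1‖ + ‖b 0 - b 1‖ ≤ 2 * Real.sqrt 2 := by
  have hadd : ‖(a 0 - a 1) + (b 0 - b 1)‖ ≤ 2 := by
    rw [show (a 0 - a 1) + (b 0 - b 1) = (a 0 + b 0) - (a 1 + b 1) by abel]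
    exact norm_sub_le_two_of_norm_le_one (h 0 0) (h 1 1)
  have hsub : ‖(a 0 - a 1) - (b 0 - b 1)‖ ≤ 2 := by
    rw [show (a 0 - a 1) - (b 0 - b 1) = (a 0 + b 1) - (a 1 + b 0) by abel]
    exact norm_sub_le_two_of_norm_le_one (h 0 1) (h 1 0)
  have hsq := sq_norm_add_sq_norm_le_of_norm_add_le_of_norm_sub_le hadd hsub
  exact ⟨hsq.trans (by norm_num), add_le_mul_sqrt_two_of_sq_add_sq_le zero_le_two hsq⟩
end
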